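/- For every ordering γ of the q adversary pairs (a bijection from the set of adversary pairs to {1,…,q}), the strategy matrix U = U(q) output by the greedy recursion (with d_k = min{z_i(k−1), z_j(k−1)} allocated symmetrically across the k-th adversary pair {i,j} = γ^{-1}(k) and reserves u_ii = z_i(q)) is a pure strategy Nash equilibrium of the power allocation game. -/

import Mathlib

/-! Since `u_ij = u_ji` on every adversary pair, the threat `Σ_{j∈A_i} u_ji` of each country
equals its own allocation `Σ_{j∈A_i} u_ij` to its adversaries, which is part of its support; so no
country is ever unsafe, and no deviation can be strictly preferred. What remains is admissibility:
each greedy step removes `min(z_i, z_j)` from both endpoints of a pair, so `z` stays nonnegative,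
and the reserves `z_i(q)` plus the allocations telescope back to `p_i`. -/

open Finset

/-- An admissible strategy matrix: nonnegative entries, zero allocation to
non-neighbors, and row `i` sums to the total power `p i`. -/
def Admissible {n : ℕ} (p : Fin n → ℝ) (F A : Fin n → Finset (Fin n))
    (U : Fin n → Fin n → ℝ) : Prop :=
  (∀ i j, 0 ≤ U i j) ∧
  (∀ i j, j ≠ i → j ∉ F i → j ∉ A i → U i j = 0) ∧
  (∀ i, ∑ j, U i j = p i)

/-- The support `σ_i(U) = u_ii + Σ_{j∈F_i} u_ji + Σ_{j∈A_i} u_ij`. -/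
def supportOf {n : ℕ} (F A : Fin n → Finset (Fin n)) (U : Fin n → Fin n → ℝ)
    (i : Fin n) : ℝ :=
  U i i + ∑ j ∈ F i, U j i + ∑ j ∈ A i, U i j

/-- The threat `τ_i(U) = Σ_{j∈A_i} u_ji`. -/
def threatOf {n : ℕ} (A : Fin n → Finset (Fin n)) (U : Fin n → Fin n → ℝ)
    (i : Fin n) : ℝ :=
  ∑ j ∈ A i, U j i

/-- A unilateral deviation by country `i` from `U`: an admissible matrix `V`
agreeing with `U` on every row except possibly row `i`. -/
def Deviation {n : ℕ} (p : Fin n → ℝ) (F A : Fin n → Finset (Fin n))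
    (U V : Fin n → Fin n → ℝ) (i : Fin n) : Prop :=
  Admissible p F A V ∧ ∀ k, k ≠ i → V k = U k

/-- Pure strategy Nash equilibrium: `U` is admissible and no country `i` has a
unilateral deviation `V` it strictly prefers, where `i` strictly prefers `V`
to `U` iff `x_i(U)` is unsafe (`σ_i(U) < τ_i(U)`) and `x_i(V)` is safe or
precarious (`τ_i(V) ≤ σ_i(V)`). -/
def NashEq {n : ℕ} (p : Fin n → ℝ) (F A : Fin n → Finset (Fin n))
    (U : Fin n → Fin n → ℝ) : Prop :=
  Admissible p F A U ∧
    ∀ i V, Deviation p F A U V i →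
      ¬ (supportOf F A U i < threatOf A U i ∧
          threatOf A V i ≤ supportOf F A V i)

/-- Incidence matrix of the edges/adversary pairs enumerated by `e`. -/
def incB {n q : ℕ} (e : Fin q → Fin n × Fin n) (i : Fin n) (k : Fin q) : ℝ :=
  if i = (e k).1 ∨ i = (e k).2 then 1 else 0

/-- The greedy recursion: `z 0 = p` and
`z (k+1) = z k − min{z_{i}(k), z_{j}(k)}·(e_i + e_j)` for the `(k+1)`-th edge
`{i,j}` (when `k < q`). -/
def greedyZ {n q : ℕ} (p : Fin n → ℝ) (e : Fin q → Fin n × Fin n) :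
    ℕ → Fin n → ℝ
  | 0 => p
  | k + 1 => fun i =>
      if h : k < q then
        greedyZ p e k i -
          min (greedyZ p e k (e ⟨k, h⟩).1) (greedyZ p e k (e ⟨k, h⟩).2) *
            ((if i = (e ⟨k, h⟩).1 then (1 : ℝ) else 0) +
              (if i = (e ⟨k, h⟩).2 then (1 : ℝ) else 0))
      else greedyZ p e k i

/-- The strategy matrix constructed from a decomposition: `u_ij = u_ji = d_k`
on the `k`-th adversary pair `{i,j}`, reserves `u_ii = c_i`, zeros elsewhere. -/
def stratU {n q : ℕ} (e : Fin q → Fin n × Fin n) (d : Fin q → ℝ)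
    (c : Fin n → ℝ) : Fin n → Fin n → ℝ :=
  fun i j => (if i = j then c i else 0) +
    ∑ k, if e k = (i, j) ∨ e k = (j, i) then d k else 0

section Equilibrium

variable {n : ℕ} {F A : Fin n → Finset (Fin n)} {U : Fin n → Fin n → ℝ}

theorem threatOf_le_supportOf_of_symm (hU : ∀ i j, 0 ≤ U i j) (hsymm : ∀ i j, U i j = U j i)
    (i : Fin n) : threatOf A U i ≤ supportOf F A U i := by
  have hF : 0 ≤ ∑ j ∈ F i, U j i := Finset.sum_nonneg fun j _ => hU j i
  have hA : ∑ j ∈ A i, U i j = ∑ j ∈ A i, U j i := Finset.sum_congr rfl fun j _ => hsymm i j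
  unfold supportOf threatOf
  linarith [hU i i]

theorem NashEq.of_symm {p : Fin n → ℝ} (hU : Admissible p F A U)
    (hsymm : ∀ i j, U i j = U j i) : NashEq p F A U :=
  ⟨hU, fun i _ _ ⟨hunsafe, _⟩ =>
    (threatOf_le_supportOf_of_symm hU.1 hsymm i).not_gt hunsafe⟩

end Equilibrium

section StratU

variable {n q : ℕ} (e : Fin q → Fin n × Fin n) (d : Fin q → ℝ) (c : Fin n → ℝ)

theorem stratU_comm (i j : Fin n) : stratU e d c i j = stratU e d c j i := by
  unfold stratU
  congr 1
  · by_cases h : i = j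
    · rw [h]
    · rw [if_neg h, if_neg (Ne.symm h)]
  · exact Finset.sum_congr rfl fun k _ => if_congr or_comm rfl rfl

theorem stratU_nonneg (hd : ∀ k, 0 ≤ d k) (hc : ∀ i, 0 ≤ c i) (i j : Fin n) :
    0 ≤ stratU e d c i j := by
  unfold stratU
  refine add_nonneg ?_ (Finset.sum_nonneg fun k _ => ?_) <;> split_ifs <;> simp [*]

theorem stratU_eq_zero {i j : Fin n} (hij : i ≠ j)
    (he : ∀ k, e k ≠ (i, j) ∧ e k ≠ (j, i)) : stratU e d c i j = 0 := by
  unfold stratU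
  rw [if_neg hij, zero_add]
  exact Finset.sum_eq_zero fun k _ => if_neg (not_or.2 (he k))

theorem sum_ite_mem_pair_eq_mul_incB (k : Fin q) (hk : (e k).1 ≠ (e k).2) (i : Fin n) :
    ∑ j, (if e k = (i, j) ∨ e k = (j, i) then d k else 0) = d k * incB e i k := by
  unfold incB
  generalize e k = x at hk ⊢
  obtain ⟨a, b⟩ := x
  simp only [Prod.mk.injEq] at hk ⊢
  by_cases ha : i = a
  · subst ha
    simp [Ne.symm hk]
  · by_cases hb : i = b
    · subst hb
      simp [ha, Ne.symm ha]
    · simp [ha, hb, Ne.symm ha, Ne.symm hb]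

theorem sum_stratU_row (hne : ∀ k, (e k).1 ≠ (e k).2) (i : Fin n) :
    ∑ j, stratU e d c i j = c i + ∑ k, d k * incB e i k := by
  unfold stratU
  rw [Finset.sum_add_distrib, Finset.sum_ite_eq, if_pos (Finset.mem_univ i), Finset.sum_comm]
  exact congrArg _ (Finset.sum_congr rfl fun k _ => sum_ite_mem_pair_eq_mul_incB e d k (hne k) i)

end StratU

section Greedy

variable {n q : ℕ} (p : Fin n → ℝ) (e : Fin q → Fin n × Fin n)

def greedyAlloc (k : Fin q) : ℝ :=
  min (greedyZ p e k (e k).1) (greedyZ p e k (e k).2)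

variable {e}

theorem greedyZ_succ {k : Fin q} (hk : (e k).1 ≠ (e k).2) (i : Fin n) :
    greedyZ p e ((k : ℕ) + 1) i = greedyZ p e k i - greedyAlloc p e k * incB e i k := by
  simp only [greedyZ, dif_pos k.isLt, Fin.eta, greedyAlloc, incB]
  by_cases h1 : i = (e k).1
  · simp [h1, hk]
  · simp [h1]

theorem greedyAlloc_mul_incB_le {k : Fin q} {i : Fin n} (hi : 0 ≤ greedyZ p e k i) :
    greedyAlloc p e k * incB e i k ≤ greedyZ p e k i := by
  unfold greedyAlloc incB
  split_ifs with h
  · rcases h with rfl | rfl <;> simp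
  · simpa using hi

theorem greedyZ_nonneg (hp : ∀ i, 0 ≤ p i) (hne : ∀ k, (e k).1 ≠ (e k).2) (m : ℕ) (i : Fin n) :
    0 ≤ greedyZ p e m i := by
  induction m generalizing i with
  | zero => exact hp i
  | succ m ih =>
    by_cases hm : m < q
    · have := greedyZ_succ p (k := ⟨m, hm⟩) (hne _) i
      have := greedyAlloc_mul_incB_le p (k := ⟨m, hm⟩) (ih i)
      simp_all
    · simp only [greedyZ, dif_neg hm]
      exact ih i

theorem greedyAlloc_nonneg (hp : ∀ i, 0 ≤ p i) (hne : ∀ k, (e k).1 ≠ (e k).2) (k : Fin q) :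
    0 ≤ greedyAlloc p e k :=
  le_min (greedyZ_nonneg p hp hne _ _) (greedyZ_nonneg p hp hne _ _)

theorem greedyZ_add_sum_eq (hne : ∀ k, (e k).1 ≠ (e k).2) (i : Fin n) {m : ℕ} (hm : m ≤ q) :
    greedyZ p e m i + ∑ k : Fin m, greedyAlloc p e (k.castLE hm) * incB e i (k.castLE hm)
      = p i := by
  induction m with
  | zero => simp [greedyZ]
  | succ m ih =>
    rw [Fin.sum_univ_castSucc, ← ih (by omega), greedyZ_succ p (k := ⟨m, hm⟩) (hne _) i]
    have hlast : Fin.castLE hm (Fin.last m) = ⟨m, hm⟩ := rfl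
    simp only [Fin.castLE_castSucc, hlast]
    ring

theorem greedyZ_add_sum_eq_self (hne : ∀ k, (e k).1 ≠ (e k).2) (i : Fin n) :
    greedyZ p e q i + ∑ k, greedyAlloc p e k * incB e i k = p i := by
  simpa using greedyZ_add_sum_eq p hne i le_rfl

end Greedy

theorem admissible_stratU_greedy {n q : ℕ} {p : Fin n → ℝ} (hp : ∀ i, 0 ≤ p i)
    {F A : Fin n → Finset (Fin n)} (hAsymm : ∀ i j, j ∈ A i ↔ i ∈ A j)
    {e : Fin q → Fin n × Fin n} (hne : ∀ k, (e k).1 ≠ (e k).2)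
    (hadv : ∀ k, (e k).2 ∈ A (e k).1) :
    Admissible p F A (stratU e (greedyAlloc p e) (greedyZ p e q)) := by
  refine ⟨stratU_nonneg e _ _ (greedyAlloc_nonneg p hp hne) (greedyZ_nonneg p hp hne q),
    fun i j hji _ hjA => stratU_eq_zero e _ _ (Ne.symm hji) fun k => ⟨?_, ?_⟩, fun i => ?_⟩
  · rintro hk
    exact hjA (by simpa [hk] using hadv k)
  · rintro hk
    exact hjA ((hAsymm i j).2 (by simpa [hk] using hadv k))
  · rw [sum_stratU_row e _ _ hne]
    exact greedyZ_add_sum_eq_self p hne i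

theorem stmt13_general (n q : ℕ) (p : Fin n → ℝ) (hp : ∀ i, 0 ≤ p i)
    (F A : Fin n → Finset (Fin n))
    (hAi : ∀ i, i ∉ A i)
    (hAsymm : ∀ i j, j ∈ A i ↔ i ∈ A j)
    (pair : Fin q → Fin n × Fin n)
    (hadv : ∀ k, (pair k).2 ∈ A (pair k).1) :
    NashEq p F A
      (stratU pair
        (fun k => min (greedyZ p pair k.1 (pair k).1)
          (greedyZ p pair k.1 (pair k).2))
        (fun i => greedyZ p pair q i)) := by
  have hne : ∀ k, (pair k).1 ≠ (pair k).2 := fun k h => hAi _ (h ▸ hadv k)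
  exact NashEq.of_symm (admissible_stratU_greedy hp hAsymm hne hadv) (stratU_comm _ _ _)

/-- for every enumeration of the adversary pairs, the strategy
matrix output by the greedy recursion (symmetric allocations
`d_k = min{z_i(k−1), z_j(k−1)}` on the `k`-th adversary pair, reserves
`u_ii = z_i(q)`) is a pure strategy Nash equilibrium. -/
theorem stmt13 (n q : ℕ) (p : Fin n → ℝ) (hp : ∀ i, 0 ≤ p i)
    (F A : Fin n → Finset (Fin n))
    (hFi : ∀ i, i ∉ F i) (hAi : ∀ i, i ∉ A i)
    (hFA : ∀ i, Disjoint (F i) (A i))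
    (hFsymm : ∀ i j, j ∈ F i ↔ i ∈ F j)
    (hAsymm : ∀ i j, j ∈ A i ↔ i ∈ A j)
    (pair : Fin q → Fin n × Fin n)
    (hadv : ∀ k, (pair k).2 ∈ A (pair k).1)
    (henum : ∀ i j, j ∈ A i → ∃! k, pair k = (i, j) ∨ pair k = (j, i)) :
    NashEq p F A
      (stratU pair
        (fun k => min (greedyZ p pair k.1 (pair k).1)
          (greedyZ p pair k.1 (pair k).2))
        (fun i => greedyZ p pair q i)) :=
  stmt13_general n q p hp F A hAi hAsymm pair hadv
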